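/- Averaged two-body energy identity and exchange bound: let W : (Fin J)⁴ → ℂ be antisymmetric within each index pair, i.e., W(i,j,k,l) = −W(j,i,k,l) = −W(i,j,l,k) for all indices, and set M_{ij} := Σ_{n=1}^N conj(G^{(n)}_i) G^{(n)}_j. Then ∫_{[0,1]^J} Σ_{m,n=1}^N Σ_{i,j,k,l=1}^J conj(c^θ_{m,i}) conj(c^θ_{n,j}) c^θ_{m,k} c^θ_{n,l} W(i,j,k,l) dθ = Σ_{i,j=1}^J (λ_i λ_j − |M_{ij}|²) · W(i,j,i,j). If in addition W(i,j,i,j) is a nonnegative real number for all i, j, then this integral is real and at most Σ_{i,j=1}^J λ_i λ_j W(i,j,i,j). -/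

import Mathlib

open MeasureTheory
open scoped Real

/-- The phase-modulated coefficients `c^θ_{n,j} := e^{2πiθ_j} G⁽ⁿ⁾_j`. -/
noncomputable def phaseCoeff {N J : ℕ} (G : Fin N → EuclideanSpace ℂ (Fin J))
    (θ : Fin J → ℝ) (n : Fin N) (j : Fin J) : ℂ :=
  Complex.exp (2 * π * Complex.I * (θ j : ℂ)) * G n j

/-- The phase-averaged two-body energy
`∫_{[0,1]^J} Σ_{m,n} Σ_{i,j,k,l} conj(c^θ_{m,i}) conj(c^θ_{n,j}) c^θ_{m,k} c^θ_{n,l} W(i,j,k,l) dθ`. -/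
noncomputable def twoBodyAverage {N J : ℕ} (G : Fin N → EuclideanSpace ℂ (Fin J))
    (W : Fin J → Fin J → Fin J → Fin J → ℂ) : ℂ :=
  ∫ θ : Fin J → ℝ in Set.univ.pi fun _ : Fin J => Set.Icc (0 : ℝ) 1,
    ∑ m : Fin N, ∑ n : Fin N, ∑ i : Fin J, ∑ j : Fin J, ∑ k : Fin J, ∑ l : Fin J,
      (starRingEnd ℂ) (phaseCoeff G θ m i) * (starRingEnd ℂ) (phaseCoeff G θ n j)
        * phaseCoeff G θ m k * phaseCoeff G θ n l * W i j k l

/-!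
Expanding the integrand, each term is a character `θ ↦ e^{2πi(θ_k + θ_l - θ_i - θ_j)}` of the
torus times a constant, and by orthogonality of characters only the index pairs with
`{k, l} = {i, j}` survive the average. Antisymmetry of `W` in its last two indices kills the
diagonal `i = j` and turns the exchanged pair `(k, l) = (j, i)` into `-W(i,j,i,j)`; the remaining
sums over `m, n` factor as `λ_i λ_j - |M_ij|²`. The bound then follows from `|M_ij|² ≥ 0`.
-/

open Complex Finset
open scoped ComplexConjugate

theorem integral_Icc_exp_two_pi_I_int_mul (n : ℤ) :
    ∫ t in Set.Icc (0 : ℝ) 1, exp (2 * π * I * n * t) = if n = 0 then 1 else 0 := by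
  rw [integral_Icc_eq_integral_Ioc, ← intervalIntegral.integral_of_le zero_le_one]
  split_ifs with hn
  · simp [hn]
  · have hc : 2 * π * I * n ≠ 0 := by simp [Real.pi_ne_zero, I_ne_zero, hn]
    have hperiod : exp (2 * π * I * n) = 1 := by
      rw [mul_comm]; exact exp_int_mul_two_pi_mul_I n
    simp [integral_exp_mul_complex hc, hperiod]

noncomputable def torusChar {ι : Type*} [Fintype ι] (a : ι → ℤ) (θ : ι → ℝ) : ℂ :=
  ∏ p, exp (2 * π * I * a p * θ p)

section torusChar

variable {ι : Type*} [Fintype ι]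

theorem torusChar_add (a b : ι → ℤ) (θ : ι → ℝ) :
    torusChar (a + b) θ = torusChar a θ * torusChar b θ := by
  simp only [torusChar, ← prod_mul_distrib, ← exp_add, Pi.add_apply, Int.cast_add]
  congr! 2; ring

theorem conj_torusChar (a : ι → ℤ) (θ : ι → ℝ) : conj (torusChar a θ) = torusChar (-a) θ := by
  simp only [torusChar, map_prod, ← exp_conj, map_mul, conj_I, conj_ofReal, map_intCast,
    map_ofNat, Pi.neg_apply, Int.cast_neg]
  congr! 2; ring

theorem torusChar_single [DecidableEq ι] (j : ι) (θ : ι → ℝ) :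
    torusChar (Pi.single j 1) θ = exp (2 * π * I * θ j) := by
  rw [torusChar, Fintype.prod_eq_single j fun p hp => by simp [hp]]
  simp

@[fun_prop]
theorem continuous_torusChar (a : ι → ℤ) : Continuous (torusChar a) := by
  unfold torusChar; fun_prop

theorem integral_torusChar (a : ι → ℤ) :
    ∫ θ in Set.univ.pi fun _ : ι => Set.Icc (0 : ℝ) 1, torusChar a θ = if a = 0 then 1 else 0 := by
  unfold torusChar
  rw [volume_pi, Measure.restrict_pi_pi,
    integral_fintype_prod_eq_prod (fun p (t : ℝ) => exp (2 * π * I * a p * t))]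
  simp only [integral_Icc_exp_two_pi_I_int_mul, Fintype.prod_boole, funext_iff, Pi.zero_apply]

theorem integral_conj_torusChar_mul (a b : ι → ℤ) :
    ∫ θ in Set.univ.pi fun _ : ι => Set.Icc (0 : ℝ) 1, conj (torusChar a θ) * torusChar b θ
      = if a = b then 1 else 0 := by
  simp only [conj_torusChar, ← torusChar_add, integral_torusChar, neg_add_eq_zero]

end torusChar

theorem Pi.single_one_add_single_one_eq_iff {ι : Type*} [DecidableEq ι] {i j k l : ι} :
    (Pi.single i 1 + Pi.single j 1 : ι → ℤ) = Pi.single k 1 + Pi.single l 1 ↔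
      i = k ∧ j = l ∨ i = l ∧ j = k := by
  simpa using Pi.single_add_single_eq_single_add_single (one_ne_zero (α := ℤ)) one_ne_zero

theorem Finset.sum_sum_ite_eq_pair {ι M : Type*} [Fintype ι] [DecidableEq ι] [AddCommGroup M]
    (f : ι → ι → M) (i j : ι) :
    ∑ k, ∑ l, (if i = k ∧ j = l ∨ i = l ∧ j = k then f k l else 0)
      = f i j + f j i - if i = j then f i i else 0 := by
  by_cases h : i = j
  · subst h; simp [and_comm, ite_and]
  · have hsplit : ∀ k l, (if i = k ∧ j = l ∨ i = l ∧ j = k then f k l else 0)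
        = (if i = k ∧ j = l then f k l else 0) + (if i = l ∧ j = k then f k l else 0) := by
      intro k l; split_ifs <;> grind
    simp [hsplit, sum_add_distrib, ite_and, h]

theorem Complex.sum_sum_conj_mul_conj_mul_sub {ι : Type*} [Fintype ι] (u v : ι → ℂ) :
    ∑ m, ∑ n, conj (u m) * conj (v n) * (u m * v n - v m * u n)
      = (((∑ m, ‖u m‖ ^ 2) * (∑ n, ‖v n‖ ^ 2) - ‖∑ n, conj (u n) * v n‖ ^ 2 : ℝ) : ℂ) := by
  push_cast
  rw [← mul_conj']
  simp only [← conj_mul', sum_mul_sum, map_sum, map_mul, conj_conj, ← sum_sub_distrib]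
  refine sum_congr rfl fun m _ => sum_congr rfl fun n _ => by ring

theorem phaseCoeff_eq_torusChar_mul {N J : ℕ} (G : Fin N → EuclideanSpace ℂ (Fin J))
    (θ : Fin J → ℝ) (n : Fin N) (j : Fin J) :
    phaseCoeff G θ n j = torusChar (Pi.single j 1) θ * G n j := by
  rw [phaseCoeff, torusChar_single]

theorem twoBodyAverage_eq_sum {N J : ℕ} (G : Fin N → EuclideanSpace ℂ (Fin J))
    (W : Fin J → Fin J → Fin J → Fin J → ℂ) :
    twoBodyAverage G W = ∑ m, ∑ n, ∑ i, ∑ j, ∑ k, ∑ l,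
      if i = k ∧ j = l ∨ i = l ∧ j = k then
        conj (G m i) * conj (G n j) * G m k * G n l * W i j k l else 0 := by
  have integrand : ∀ θ m n i j k l,
      conj (phaseCoeff G θ m i) * conj (phaseCoeff G θ n j) * phaseCoeff G θ m k
        * phaseCoeff G θ n l * W i j k l
      = conj (torusChar (Pi.single i 1 + Pi.single j 1) θ)
          * torusChar (Pi.single k 1 + Pi.single l 1) θ
          * (conj (G m i) * conj (G n j) * G m k * G n l * W i j k l) := by
    intros
    simp only [phaseCoeff_eq_torusChar_mul, torusChar_add, map_mul]
    ring
  have integrable : ∀ f : (Fin J → ℝ) → ℂ, Continuous f →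
      Integrable f (volume.restrict (Set.univ.pi fun _ : Fin J => Set.Icc (0 : ℝ) 1)) :=
    fun f hf => hf.continuousOn.integrableOn_compact (isCompact_univ_pi fun _ => isCompact_Icc)
  simp_rw [twoBodyAverage, integrand]
  simp (disch := intros; apply integrable; fun_prop) only
    [integral_finsetSum, integral_mul_const, integral_conj_torusChar_mul,
      Pi.single_one_add_single_one_eq_iff, ite_mul, one_mul, zero_mul]

theorem twoBodyAverage_eq {N J : ℕ} (G : Fin N → EuclideanSpace ℂ (Fin J))
    (W : Fin J → Fin J → Fin J → Fin J → ℂ) (hW : ∀ i j k l, W i j k l = - W i j l k) :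
    twoBodyAverage G W
      = ∑ i : Fin J, ∑ j : Fin J,
          (((∑ n : Fin N, ‖G n i‖ ^ 2) * (∑ n : Fin N, ‖G n j‖ ^ 2)
              - ‖∑ n : Fin N, conj (G n i) * G n j‖ ^ 2 : ℝ) : ℂ) * W i j i j := by
  have hdiag : ∀ i j, W i j i i = 0 := fun i j => CharZero.eq_neg_self_iff.mp (hW i j i i)
  have hswap : ∀ i j, W i j j i = - W i j i j := fun i j => hW i j j i
  simp only [twoBodyAverage_eq_sum, Finset.sum_sum_ite_eq_pair, hdiag, hswap, mul_zero, ite_self,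
    sub_zero]
  simp_rw [sum_comm (γ := Fin N) (α := Fin J), ← Complex.sum_sum_conj_mul_conj_mul_sub, sum_mul]
  refine sum_congr rfl fun i _ => sum_congr rfl fun j _ =>
    sum_congr rfl fun m _ => sum_congr rfl fun n _ => by ring

theorem averaged_two_body_energy_general (N J : ℕ)
    (G : Fin N → EuclideanSpace ℂ (Fin J))
    (W : Fin J → Fin J → Fin J → Fin J → ℂ)
    (hW2 : ∀ i j k l, W i j k l = - W i j l k) :
    twoBodyAverage G W
      = ∑ i : Fin J, ∑ j : Fin J,
          (((∑ n : Fin N, ‖G n i‖ ^ 2) * (∑ n : Fin N, ‖G n j‖ ^ 2)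
              - ‖∑ n : Fin N, (starRingEnd ℂ) (G n i) * G n j‖ ^ 2 : ℝ) : ℂ) * W i j i j
    ∧ ((∀ i j, (W i j i j).im = 0 ∧ 0 ≤ (W i j i j).re) →
        (twoBodyAverage G W).im = 0 ∧
        (twoBodyAverage G W).re
          ≤ ∑ i : Fin J, ∑ j : Fin J,
              (∑ n : Fin N, ‖G n i‖ ^ 2) * (∑ n : Fin N, ‖G n j‖ ^ 2) * (W i j i j).re) := by
  refine ⟨twoBodyAverage_eq G W hW2, fun hW => ?_⟩
  simp only [twoBodyAverage_eq G W hW2, re_sum, im_sum, re_ofReal_mul, im_ofReal_mul]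
  exact ⟨sum_eq_zero fun i _ => sum_eq_zero fun j _ => by simp [(hW i j).1],
    sum_le_sum fun i _ => sum_le_sum fun j _ =>
      mul_le_mul_of_nonneg_right (sub_le_self _ (sq_nonneg _)) (hW i j).2⟩

/-- **Averaged two-body energy identity and exchange bound**: for `W` antisymmetric in each
index pair and `M_{ij} := Σ_n conj(G⁽ⁿ⁾_i) G⁽ⁿ⁾_j`, the average equals
`Σ_{i,j} (λ_i λ_j − |M_{ij}|²) W(i,j,i,j)`; if moreover each `W(i,j,i,j)` is a nonnegative
real, the average is real and at most `Σ_{i,j} λ_i λ_j W(i,j,i,j)`. -/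
theorem averaged_two_body_energy (N J : ℕ) (hN : 0 < N) (hNJ : N ≤ J)
    (G : Fin N → EuclideanSpace ℂ (Fin J)) (hG : Orthonormal ℂ G)
    (W : Fin J → Fin J → Fin J → Fin J → ℂ)
    (hW1 : ∀ i j k l, W i j k l = - W j i k l)
    (hW2 : ∀ i j k l, W i j k l = - W i j l k) :
    twoBodyAverage G W
      = ∑ i : Fin J, ∑ j : Fin J,
          (((∑ n : Fin N, ‖G n i‖ ^ 2) * (∑ n : Fin N, ‖G n j‖ ^ 2)
              - ‖∑ n : Fin N, (starRingEnd ℂ) (G n i) * G n j‖ ^ 2 : ℝ) : ℂ) * W i j i j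
    ∧ ((∀ i j, (W i j i j).im = 0 ∧ 0 ≤ (W i j i j).re) →
        (twoBodyAverage G W).im = 0 ∧
        (twoBodyAverage G W).re
          ≤ ∑ i : Fin J, ∑ j : Fin J,
              (∑ n : Fin N, ‖G n i‖ ^ 2) * (∑ n : Fin N, ‖G n j‖ ^ 2) * (W i j i j).re) :=
  averaged_two_body_energy_general N J G W hW2
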